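/- For α ≥ 1, the weighted space l²_a(α) satisfies the composition inequality ‖φ ∘ f‖²_{l²_a(α)} ≤ φ(‖f‖²_{H²}) for every f ∈ H², where φ(z) = z^{2α−1} (with 2α−1 a positive integer). -/

import Mathlib

open Complex Metric ComplexConjugate

noncomputable section

/-- Predicate: `f` is holomorphic on the unit disc. -/
def HolOn (f : ℂ → ℂ) : Prop := AnalyticOn ℂ f (Metric.ball 0 1)

/-- `k`-th Taylor coefficient of `f` at the origin. -/
def coef (f : ℂ → ℂ) (k : ℕ) : ℂ := iteratedDeriv k f 0 / (Nat.factorial k)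

/-- Hardy space `H²` norm via Taylor coefficients. -/
def H2norm (f : ℂ → ℂ) : ℝ := Real.sqrt (∑' k : ℕ, ‖coef f k‖ ^ 2)

def MemH2 (f : ℂ → ℂ) : Prop := HolOn f ∧ Summable (fun k : ℕ => ‖coef f k‖ ^ 2)

def Hinfnorm (f : ℂ → ℂ) : ℝ := sSup ((fun z => ‖f z‖) '' Metric.ball (0:ℂ) 1)

def MemHinf (f : ℂ → ℂ) : Prop := HolOn f ∧ BddAbove ((fun z => ‖f z‖) '' Metric.ball (0:ℂ) 1)

/-- Elementary Blaschke factor. -/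
def blaschke (l z : ℂ) : ℂ := (l - z) / (1 - conj l * z)

def BlaschkeProd {n : ℕ} (l : Fin n → ℂ) (z : ℂ) : ℂ := ∏ i, blaschke (l i) z

/-- `g` agrees with `f` on the finite sequence `l` (with multiplicities). -/
def AgreeOn {n : ℕ} (l : Fin n → ℂ) (f g : ℂ → ℂ) : Prop :=
  ∃ h : ℂ → ℂ, HolOn h ∧ ∀ z ∈ Metric.ball (0:ℂ) 1, f z - g z = BlaschkeProd l z * h z

/-- Interpolation constant `c(σ, H², H^∞)`. -/
def cH2Hinf {n : ℕ} (l : Fin n → ℂ) : ℝ :=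
  sSup { c | ∃ f, MemH2 f ∧ H2norm f ≤ 1 ∧
    c = sInf { m | ∃ g, MemHinf g ∧ Hinfnorm g = m ∧ AgreeOn l f g } }

/-- `C_{n,r}(H², H^∞)`. -/
def CnrH2Hinf (n : ℕ) (r : ℝ) : ℝ :=
  sSup { c | ∃ m, m ≤ n ∧ ∃ l : Fin m → ℂ, (∀ i, ‖l i‖ ≤ r) ∧ c = cH2Hinf l }

/-- Cauchy sesquilinear pairing. -/
def cauchyPairing (f g : ℂ → ℂ) : ℂ := ∑' k : ℕ, coef f k * conj (coef g k)

/-- Membership in the model space `K_B = H² ⊖ B H²`. -/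
def MemKB {n : ℕ} (l : Fin n → ℂ) (g : ℂ → ℂ) : Prop :=
  MemH2 g ∧ ∀ h, MemH2 h → cauchyPairing g (fun z => BlaschkeProd l z * h z) = 0
/-- Weighted space `l²_a(α)` norm: `‖f‖² = Σ |f̂(k)|²/(k+1)^{2(α-1)}`. -/
def l2aNorm (α : ℝ) (f : ℂ → ℂ) : ℝ :=
  Real.sqrt (∑' k : ℕ, ‖coef f k‖ ^ 2 / ((k : ℝ) + 1) ^ (2 * (α - 1)))

def Meml2a (α : ℝ) (f : ℂ → ℂ) : Prop :=
  HolOn f ∧ Summable (fun k : ℕ => ‖coef f k‖ ^ 2 / ((k : ℝ) + 1) ^ (2 * (α - 1)))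

/-!
The Taylor coefficients of `f ^ (n + 2) = f * f ^ (n + 1)` are the Cauchy product of those of `f`
and of `f ^ (n + 1)`. By Cauchy–Schwarz, the `k`-th one satisfies
`|c_k|² ≤ (k + 1) ∑_{i + j = k} |a_i|² |b_j|²`, and the factor `k + 1` is absorbed by passing from
the weight `(k + 1)^(-n)` to `(k + 1)^(-(n + 1))`. Summing over `k` gives
`‖f ^ (n + 2)‖²_{n + 1} ≤ ‖f‖²_{H²} ‖f ^ (n + 1)‖²_n`, and induction on `n` concludes; for
`2α - 1 = n + 1` the weight `(k + 1)^(2(α - 1))` is exactly `(k + 1)^n`.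
-/

open Finset

section CauchyProduct

variable {R : Type*} [SeminormedRing R]

theorem sq_norm_sum_range_mul_le (a b : ℕ → R) (k : ℕ) :
    ‖∑ i ∈ range (k + 1), a i * b (k - i)‖ ^ 2 ≤
      ((k : ℝ) + 1) * ∑ i ∈ range (k + 1), ‖a i‖ ^ 2 * ‖b (k - i)‖ ^ 2 :=
  calc ‖∑ i ∈ range (k + 1), a i * b (k - i)‖ ^ 2
      ≤ (∑ i ∈ range (k + 1), ‖a i‖ * ‖b (k - i)‖) ^ 2 := by
        gcongr
        exact (norm_sum_le _ _).trans (sum_le_sum fun i _ => norm_mul_le _ _)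
    _ ≤ #(range (k + 1)) * ∑ i ∈ range (k + 1), (‖a i‖ * ‖b (k - i)‖) ^ 2 :=
        sq_sum_le_card_mul_sum_sq
    _ = ((k : ℝ) + 1) * ∑ i ∈ range (k + 1), ‖a i‖ ^ 2 * ‖b (k - i)‖ ^ 2 := by
        simp only [card_range, Nat.cast_succ, mul_pow]

theorem sq_norm_sum_range_mul_div_pow_succ_le (a b : ℕ → R) (m k : ℕ) :
    ‖∑ i ∈ range (k + 1), a i * b (k - i)‖ ^ 2 / ((k : ℝ) + 1) ^ (m + 1) ≤
      ∑ i ∈ range (k + 1), ‖a i‖ ^ 2 * (‖b (k - i)‖ ^ 2 / (((k - i : ℕ) : ℝ) + 1) ^ m) := by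
  have hk : (0 : ℝ) < (k : ℝ) + 1 := by positivity
  calc ‖∑ i ∈ range (k + 1), a i * b (k - i)‖ ^ 2 / ((k : ℝ) + 1) ^ (m + 1)
      ≤ ((k : ℝ) + 1) * (∑ i ∈ range (k + 1), ‖a i‖ ^ 2 * ‖b (k - i)‖ ^ 2) /
          ((k : ℝ) + 1) ^ (m + 1) := by
        gcongr
        exact sq_norm_sum_range_mul_le a b k
    _ = ∑ i ∈ range (k + 1), ‖a i‖ ^ 2 * (‖b (k - i)‖ ^ 2 / ((k : ℝ) + 1) ^ m) := by
        rw [pow_succ', mul_div_mul_left _ _ hk.ne', sum_div]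
        simp only [mul_div_assoc]
    _ ≤ ∑ i ∈ range (k + 1), ‖a i‖ ^ 2 * (‖b (k - i)‖ ^ 2 / (((k - i : ℕ) : ℝ) + 1) ^ m) := by
        gcongr with i hi
        have : k - i ≤ k := Nat.sub_le k i
        exact_mod_cast this

theorem summable_and_tsum_sq_norm_sum_range_mul_div_le {a b : ℕ → R} {m : ℕ}
    (ha : Summable fun k => ‖a k‖ ^ 2)
    (hb : Summable fun k => ‖b k‖ ^ 2 / ((k : ℝ) + 1) ^ m) :
    Summable (fun k => ‖∑ i ∈ range (k + 1), a i * b (k - i)‖ ^ 2 / ((k : ℝ) + 1) ^ (m + 1)) ∧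
      ∑' k, ‖∑ i ∈ range (k + 1), a i * b (k - i)‖ ^ 2 / ((k : ℝ) + 1) ^ (m + 1) ≤
        (∑' k, ‖a k‖ ^ 2) * ∑' k, ‖b k‖ ^ 2 / ((k : ℝ) + 1) ^ m := by
  have hprod := hasSum_sum_range_mul_of_summable_norm (R := ℝ) ha.norm hb.norm
  have hbound := sq_norm_sum_range_mul_div_pow_succ_le a b m
  have hsum := Summable.of_nonneg_of_le (fun k => by positivity) hbound hprod.summable
  refine ⟨hsum, ?_⟩
  rw [← hprod.tsum_eq]
  exact hsum.tsum_le_tsum hbound hprod.summable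

end CauchyProduct

theorem coef_mul {f g : ℂ → ℂ} (hf : AnalyticAt ℂ f 0) (hg : AnalyticAt ℂ g 0) (k : ℕ) :
    coef (fun z => f z * g z) k = ∑ i ∈ range (k + 1), coef f i * coef g (k - i) := by
  rw [coef, iteratedDeriv_fun_mul hf.contDiffAt hg.contDiffAt, sum_div]
  refine sum_congr rfl fun i hi => ?_
  have hik : i ≤ k := Nat.lt_succ_iff.mp (mem_range.mp hi)
  have hfact : ∀ j : ℕ, (j.factorial : ℂ) ≠ 0 := fun j => Nat.cast_ne_zero.mpr j.factorial_ne_zero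
  rw [coef, coef, Nat.cast_choose ℂ hik]
  field_simp [hfact]

theorem MemH2.summable_and_tsum_coef_pow_succ_le {f : ℂ → ℂ} (hf : MemH2 f) (n : ℕ) :
    Summable (fun k => ‖coef (fun z => f z ^ (n + 1)) k‖ ^ 2 / ((k : ℝ) + 1) ^ n) ∧
      ∑' k, ‖coef (fun z => f z ^ (n + 1)) k‖ ^ 2 / ((k : ℝ) + 1) ^ n ≤
        (∑' k, ‖coef f k‖ ^ 2) ^ (n + 1) := by
  induction n with
  | zero => simpa using hf.2
  | succ n ih =>
    have hf0 : AnalyticAt ℂ f 0 := hf.1.analyticAt (ball_mem_nhds 0 one_pos)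
    have hcoef : coef (fun z => f z ^ (n + 2)) =
        fun k => ∑ i ∈ range (k + 1), coef f i * coef (fun z => f z ^ (n + 1)) (k - i) := by
      funext k
      simp_rw [pow_succ' _ (n + 1)]
      exact coef_mul hf0 (hf0.pow _) k
    obtain ⟨hsum, hle⟩ := summable_and_tsum_sq_norm_sum_range_mul_div_le hf.2 ih.1
    refine ⟨hcoef ▸ hsum, ?_⟩
    calc ∑' k, ‖coef (fun z => f z ^ (n + 2)) k‖ ^ 2 / ((k : ℝ) + 1) ^ (n + 1)
        ≤ (∑' k, ‖coef f k‖ ^ 2) *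
            ∑' k, ‖coef (fun z => f z ^ (n + 1)) k‖ ^ 2 / ((k : ℝ) + 1) ^ n := hcoef ▸ hle
      _ ≤ (∑' k, ‖coef f k‖ ^ 2) * (∑' k, ‖coef f k‖ ^ 2) ^ (n + 1) :=
        mul_le_mul_of_nonneg_left ih.2 (tsum_nonneg fun k => by positivity)
      _ = (∑' k, ‖coef f k‖ ^ 2) ^ (n + 2) := (pow_succ' _ _).symm

/-- Composition (power) inequality for `l²_a(α)`: for `φ(z) = z^{2α-1}` with
`2α-1` a positive integer and every `f ∈ H²`,
`‖φ ∘ f‖²_{l²_a(α)} ≤ φ(‖f‖²_{H²})`, i.e. `‖f^{2α-1}‖² ≤ (‖f‖²_{H²})^{2α-1}`. -/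
theorem l2a_composition_inequality (α : ℝ) (hα : 1 ≤ α) (N : ℕ) (hN : 2 * α - 1 = (N : ℝ))
    (f : ℂ → ℂ) (hf : MemH2 f) :
    Meml2a α (fun z => f z ^ N) ∧
      l2aNorm α (fun z => f z ^ N) ^ 2 ≤ (H2norm f ^ 2) ^ N := by
  have hN1 : 1 ≤ N := by exact_mod_cast (by linarith : (1 : ℝ) ≤ N)
  obtain ⟨n, rfl⟩ := Nat.exists_eq_add_of_le' hN1
  have hweight : 2 * (α - 1) = (n : ℝ) := by push_cast at hN; linarith
  obtain ⟨hsum, hle⟩ := hf.summable_and_tsum_coef_pow_succ_le n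
  have hw (k : ℕ) : ((k : ℝ) + 1) ^ (2 * (α - 1)) = ((k : ℝ) + 1) ^ n := by
    rw [hweight, Real.rpow_natCast]
  refine ⟨⟨hf.1.pow _, by simpa only [hw] using hsum⟩, ?_⟩
  rw [l2aNorm, H2norm, Real.sq_sqrt (tsum_nonneg fun k => by positivity),
    Real.sq_sqrt (tsum_nonneg fun k => by positivity)]
  simpa only [hw] using hle
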